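/- Let 𝒞 ⊆ 𝔞 be a nonempty finitely generated convex set and let F, F' be two distinct faces of 𝒞. Then 𝔞_F^+ ∩ 𝔞_{F'}^+ = ∅. -/

import Mathlib

open Pointwise

variable {E : Type*} [NormedAddCommGroup E] [InnerProductSpace ℝ E] [FiniteDimensional ℝ E]

/-- A finitely generated convex set: a finite intersection of closed half-spaces. -/
def IsFGConvex (C : Set E) : Prop :=
  ∃ s : Finset (E × ℝ), C = {X | ∀ p ∈ s, (inner ℝ p.1 X : ℝ) ≤ p.2}

/-- The tangent cone `T_C(H) = ℝ≥0 · (C - H)`. -/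
def tangCone (C : Set E) (H : E) : Set E :=
  {X | ∃ t : ℝ, 0 ≤ t ∧ ∃ c ∈ C, X = t • (c - H)}

/-- The normal cone `N_C(H) = {Y | (Y,X) ≤ 0 for all X ∈ T_C(H)}`. -/
def normCone (C : Set E) (H : E) : Set E :=
  {Y | ∀ X ∈ tangCone C H, (inner ℝ Y X : ℝ) ≤ 0}

/-- The asymptotic cone of `C`: the set of `X` with `C + ℝ≥0 · X = C`. -/
def asympCone (C : Set E) : Set E :=
  {X | C + {Y | ∃ t : ℝ, 0 ≤ t ∧ Y = t • X} = C}

/-- The dual cone `C∨ = {Y | (Y,X) ≤ 0 for all X ∈ C}`. -/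
def polarCone (C : Set E) : Set E :=
  {Y | ∀ X ∈ C, (inner ℝ Y X : ℝ) ≤ 0}

/-- A face of `C`: the (nonempty) intersection of `C` with a supporting affine hyperplane
`{H | (λ,H) = c}`, where `(λ,H) ≤ c` on all of `C` (the case `λ = 0` being allowed). -/
def IsFace (C F : Set E) : Prop :=
  F.Nonempty ∧ ∃ (lam : E) (c : ℝ), (∀ H ∈ C, (inner ℝ lam H : ℝ) ≤ c) ∧
    F = {H | H ∈ C ∧ (inner ℝ lam H : ℝ) = c}

/-- `𝔞_F^+`: the relative interior of the normal cone `N_C(X_F)`, for `X_F` in the relative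
interior of the face `F` (this normal cone does not depend on the choice of such `X_F`). -/
def aFplus (C F : Set E) : Set E :=
  ⋃ X ∈ intrinsicInterior ℝ F, intrinsicInterior ℝ (normCone C X)

open scoped InnerProductSpace Topology

/-! `N_C(X)` consists of the vectors `Y` whose functional `(Y, ·)` is maximised on `C` at `X`. A
vector in the relative interior of `N_C(X_F)` is maximised on `C` exactly along `F`, so two faces
sharing such a vector are the same argmax set. -/

theorem exists_add_smul_sub_mem_of_mem_intrinsicInterior {V : Type*} [AddCommGroup V]
    [Module ℝ V] [TopologicalSpace V] [IsTopologicalAddGroup V] [ContinuousSMul ℝ V]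
    {s : Set V} {x y : V} (hx : x ∈ intrinsicInterior ℝ s) (hy : y ∈ s) :
    ∃ ε : ℝ, 0 < ε ∧ x + ε • (x - y) ∈ s := by
  obtain ⟨x', hx', rfl⟩ := hx
  have hline : ∀ t : ℝ, (x' : V) + t • ((x' : V) - y) ∈ affineSpan ℝ s := fun t => by
    simpa [vsub_eq_sub, vadd_eq_add, add_comm] using
      AffineSubspace.smul_vsub_vadd_mem (affineSpan ℝ s) t x'.2 (subset_affineSpan ℝ s hy) x'.2
  let f : ℝ → affineSpan ℝ s := fun t => ⟨_, hline t⟩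
  have hf : Continuous f := by fun_prop
  have hf0 : f 0 = x' := by ext; simp [f]
  have hnhds : ∀ᶠ t in 𝓝[>] (0 : ℝ), f t ∈ interior ((↑) ⁻¹' s) :=
    nhdsWithin_le_nhds <| hf.continuousAt.preimage_mem_nhds (hf0 ▸ isOpen_interior.mem_nhds hx')
  obtain ⟨ε, hεs, hε⟩ := (hnhds.and self_mem_nhdsWithin).exists
  exact ⟨ε, hε, interior_subset (s := ((↑) : affineSpan ℝ s → V) ⁻¹' s) hεs⟩

section NormalCone

variable {V : Type*} [NormedAddCommGroup V] [InnerProductSpace ℝ V]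

theorem mem_normCone_iff {C : Set V} {X Y : V} :
    Y ∈ normCone C X ↔ ∀ H ∈ C, ⟪Y, H⟫_ℝ ≤ ⟪Y, X⟫_ℝ := by
  constructor
  · intro hY H hH
    have := hY (H - X) ⟨1, zero_le_one, H, hH, (one_smul ℝ _).symm⟩
    rw [inner_sub_right] at this
    linarith
  · rintro hY _ ⟨t, ht, H, hH, rfl⟩
    rw [real_inner_smul_right, inner_sub_right]
    exact mul_nonpos_of_nonneg_of_nonpos ht (sub_nonpos.2 (hY H hH))

theorem IsFace.subset {C F : Set V} (hF : IsFace C F) : F ⊆ C := by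
  obtain ⟨-, -, -, -, rfl⟩ := hF
  exact fun _ hH => hH.1

/-- `X` lies strictly inside a segment of `F` through `H`, and a linear functional maximised at
an interior point of a segment is constant on it. -/
theorem inner_eq_of_mem_normCone_of_mem_intrinsicInterior {C F : Set V} {X Y H : V}
    (hFC : F ⊆ C) (hX : X ∈ intrinsicInterior ℝ F) (hY : Y ∈ normCone C X) (hH : H ∈ F) :
    ⟪Y, H⟫_ℝ = ⟪Y, X⟫_ℝ := by
  obtain ⟨ε, hε, hmem⟩ := exists_add_smul_sub_mem_of_mem_intrinsicInterior hX hH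
  have hbeyond := mem_normCone_iff.1 hY _ (hFC hmem)
  rw [inner_add_right, real_inner_smul_right, inner_sub_right] at hbeyond
  have hle := mem_normCone_iff.1 hY H (hFC hH)
  nlinarith

/-- The functional `λ` defining the face lies in `N_C(X)`; moving `Y` slightly away from `λ`
stays in `N_C(X)`, which forces `(λ, H) = c` wherever `(Y, H) = (Y, X)`. -/
theorem IsFace.mem_of_inner_eq {C F : Set V} {X Y H : V} (hF : IsFace C F) (hX : X ∈ F)
    (hY : Y ∈ intrinsicInterior ℝ (normCone C X)) (hH : H ∈ C) (hYH : ⟪Y, H⟫_ℝ = ⟪Y, X⟫_ℝ) :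
    H ∈ F := by
  obtain ⟨-, lam, c, hsupp, rfl⟩ := hF
  have hlam : lam ∈ normCone C X := mem_normCone_iff.2 fun H hH => hX.2 ▸ hsupp H hH
  obtain ⟨ε, hε, hmem⟩ := exists_add_smul_sub_mem_of_mem_intrinsicInterior hY hlam
  have hpushed := mem_normCone_iff.1 hmem H hH
  rw [inner_add_left, inner_add_left, real_inner_smul_left, real_inner_smul_left,
    inner_sub_left, inner_sub_left, hYH, hX.2] at hpushed
  refine ⟨hH, le_antisymm (hsupp H hH) ?_⟩
  nlinarith

theorem IsFace.eq_setOf_inner_eq {C F : Set V} {X Y : V} (hF : IsFace C F)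
    (hX : X ∈ intrinsicInterior ℝ F) (hY : Y ∈ intrinsicInterior ℝ (normCone C X)) :
    F = {H | H ∈ C ∧ ⟪Y, H⟫_ℝ = ⟪Y, X⟫_ℝ} := by
  ext H
  refine ⟨fun hH => ⟨hF.subset hH, ?_⟩, fun hH => hF.mem_of_inner_eq ?_ hY hH.1 hH.2⟩
  · exact inner_eq_of_mem_normCone_of_mem_intrinsicInterior hF.subset hX
      (intrinsicInterior_subset hY) hH
  · exact intrinsicInterior_subset hX

end NormalCone

theorem stmt_6_general (C F F' : Set E)
    (hF : IsFace C F) (hF' : IsFace C F') (hFF' : F ≠ F') :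
    aFplus C F ∩ aFplus C F' = ∅ := by
  refine Set.eq_empty_of_forall_notMem fun Y ⟨hYF, hYF'⟩ => hFF' ?_
  simp only [aFplus, Set.mem_iUnion, exists_prop] at hYF hYF'
  obtain ⟨X, hX, hY⟩ := hYF
  obtain ⟨X', hX', hY'⟩ := hYF'
  have hXX' : ⟪Y, X⟫_ℝ = ⟪Y, X'⟫_ℝ := le_antisymm
    (mem_normCone_iff.1 (intrinsicInterior_subset hY') X (hF.subset (intrinsicInterior_subset hX)))
    (mem_normCone_iff.1 (intrinsicInterior_subset hY) X' (hF'.subset (intrinsicInterior_subset hX')))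
  rw [hF.eq_setOf_inner_eq hX hY, hF'.eq_setOf_inner_eq hX' hY', hXX']

theorem stmt_6 (C F F' : Set E) (hC : IsFGConvex C) (hne : C.Nonempty)
    (hF : IsFace C F) (hF' : IsFace C F') (hFF' : F ≠ F') :
    aFplus C F ∩ aFplus C F' = ∅ :=
  stmt_6_general C F F' hF hF' hFF'
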